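/- arXiv:1609.07746 — 4 statements merged into one kernel-verified Lean document; each statement's English description precedes it below -/
import Mathlib

section
/- Let (R,m) be a Noetherian local ring of dimension d > 0, Q an m-primary ideal, and K an ideal containing Q. Writing the Hilbert polynomials P_K(Q,n) = Σ_{i=0}^d (-1)^i g_i(Q) C(n+d-i-1, d-i) and P(Q,n) = Σ_{i=0}^d (-1)^i e_i(Q) C(n+d-i-1, d-i), and the fiber cone polynomial P(F,n) = Σ_{i=0}^{d-1} (-1)^i f_i(Q) C(n+d-i-1, d-1-i), one has g_0(Q) = e_0(Q) and f_i(Q) = e_{i+1}(Q) - g_{i+1}(Q) + e_i(Q) - g_i(Q) for 0 ≤ i ≤ d-1. -/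
open IsLocalRing

/-- The length of an `R`-module `M`, realized as the Krull dimension of its
lattice of submodules. -/
noncomputable def mLen (R M : Type*) [CommRing R] [AddCommGroup M] [Module R M] :
    WithBot ℕ∞ :=
  Order.krullDim (Submodule R M)

/-- `Q` is a parameter ideal of the `d`-dimensional Noetherian local ring `R`:
it is generated by `d` elements and is `m`-primary. -/
def IsParameterIdeal (R : Type*) [CommRing R] [IsLocalRing R] (d : ℕ) (Q : Ideal R) : Prop :=
  (∃ x : Fin d → R, Q = Ideal.span (Set.range x)) ∧ Q.radical = maximalIdeal R

/-- There is a regular sequence of length `e` contained in the maximal ideal. -/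
def HasRegSeq (R : Type*) [CommRing R] [IsLocalRing R] (e : ℕ) : Prop :=
  ∃ rs : List R, rs.length = e ∧ (∀ r ∈ rs, r ∈ maximalIdeal R) ∧
    RingTheory.Sequence.IsRegular R rs

/-- A Noetherian local ring of dimension `d` is Cohen-Macaulay iff its depth is `d`,
i.e. iff there is a regular sequence of length `d` in the maximal ideal. -/
def IsCMLocal (R : Type*) [CommRing R] [IsLocalRing R] (d : ℕ) : Prop :=
  HasRegSeq R d

/-- The depth of the local ring `R` equals `e`. -/
def DepthEq (R : Type*) [CommRing R] [IsLocalRing R] (e : ℕ) : Prop :=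
  HasRegSeq R e ∧ ¬ HasRegSeq R (e + 1)

/-- `R` is unmixed: every associated prime of the `m`-adic completion `R̂`
has `dim R̂/p = dim R̂`. -/
def IsUnmixed (R : Type*) [CommRing R] [IsLocalRing R] : Prop :=
  ∀ p ∈ associatedPrimes (AdicCompletion (maximalIdeal R) R)
      (AdicCompletion (maximalIdeal R) R),
    ringKrullDim ((AdicCompletion (maximalIdeal R) R) ⧸ p) =
      ringKrullDim (AdicCompletion (maximalIdeal R) R)

/-- The alternating binomial expansion `Σ_{i=0}^d (-1)^i g_i C(n+d-i-1, d-i)`. -/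
def hilbSum (d : ℕ) (g : ℕ → ℤ) (n : ℕ) : ℤ :=
  ∑ i ∈ Finset.range (d + 1), (-1 : ℤ) ^ i * g i * ((n + d - i - 1).choose (d - i) : ℤ)

/-- The alternating binomial expansion `Σ_{i=0}^{d-1} (-1)^i f_i C(n+d-i-1, d-1-i)`. -/
def fiberSum (d : ℕ) (f : ℕ → ℤ) (n : ℕ) : ℤ :=
  ∑ i ∈ Finset.range d, (-1 : ℤ) ^ i * f i * ((n + d - i - 1).choose (d - 1 - i) : ℤ)

/-- The length `ℓ(Qⁿ/KQⁿ)` of the `n`-th component of the fiber cone `F_K(Q)`. -/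
noncomputable def fibLen (R : Type*) [CommRing R] (Q K : Ideal R) (n : ℕ) : WithBot ℕ∞ :=
  mLen R (↥(Q ^ n) ⧸ (Submodule.comap (Submodule.subtype (Q ^ n : Submodule R R))
    (K * Q ^ n : Ideal R)))

/-- `x ∈ Q`, and the degree-one initial form `x*` of `x` in the associated graded ring
`G(Q)` is nonzero and superficial: `(Qⁿ : x) ∩ Q^c = Q^{n-1}` for all `n > c`. -/
def IsGSuperficial {R : Type*} [CommRing R] (Q : Ideal R) (x : R) : Prop :=
  x ∈ Q ∧ x ∉ Q ^ 2 ∧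
    ∃ c > 0, ∀ n > c, Submodule.colon (Q ^ n) (Ideal.span {x}) ⊓ Q ^ c = Q ^ (n - 1)

/-- `x ∈ Q`, and the degree-one initial form `x°` of `x` in the fiber cone `F_K(Q)` is
nonzero and superficial: `(0 : x°) ∩ F_K(Q)_n = 0` for all `n > c`, i.e.
`(KQ^{n+1} : x) ∩ Qⁿ ⊆ KQⁿ` for all `n > c`. -/
def IsFSuperficial {R : Type*} [CommRing R] (Q K : Ideal R) (x : R) : Prop :=
  x ∈ Q ∧ x ∉ K * Q ∧
    ∃ c > 0, ∀ n > c,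
      Submodule.colon (K * Q ^ (n + 1)) (Ideal.span {x}) ⊓ Q ^ n ≤ K * Q ^ n

/-!
The exact sequence `0 → Qⁿ/KQⁿ → R/KQⁿ → R/Qⁿ → 0` gives `ℓ(R/KQⁿ) = ℓ(Qⁿ/KQⁿ) + ℓ(R/Qⁿ)`,
so `P_K(Q, n) - P(Q, n) = P(F, n)` for large `n`. Comparing coefficients of these expansions:
`d - 1` forward differences in `n` reduce the identity to degree one, whose next difference is
`g_0 - e_0 = 0`. Once the constant coefficient vanishes, Pascal's rule rewrites
`Σ (-1)^i (g_i - e_i) C(n+d-i-1, d-i)` in the basis of the fiber expansion with coefficients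
`-(g_i - e_i) - (g_{i+1} - e_{i+1})`, and these bases are linearly independent as functions of
large `n`.
-/

open Filter

theorem mLen_eq_length (R M : Type*) [CommRing R] [AddCommGroup M] [Module R M] :
    mLen R M = Module.length R M :=
  (Module.coe_length R M).symm

theorem Module.length_quotient_eq_add_of_le {R M : Type*} [Ring R] [AddCommGroup M] [Module R M]
    {N P : Submodule R M} (h : N ≤ P) :
    Module.length R (M ⧸ N) =
      Module.length R (P ⧸ N.comap P.subtype) + Module.length R (M ⧸ P) := by
  set P' := P.map N.mkQ
  have hker : LinearMap.ker (N.mkQ ∘ₗ P.subtype) = N.comap P.subtype := by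
    rw [LinearMap.ker_comp, Submodule.ker_mkQ]
  have hrange : LinearMap.range (N.mkQ ∘ₗ P.subtype) = P' := by
    rw [LinearMap.range_comp, Submodule.range_subtype]
  rw [Module.length_eq_add_of_exact P'.subtype P'.mkQ P'.injective_subtype P'.mkQ_surjective
      (LinearMap.exact_subtype_mkQ P'), (Submodule.quotientQuotientEquivQuotient N P h).length_eq,
    ((Submodule.quotEquivOfEq _ _ hker.symm).trans
      ((N.mkQ ∘ₗ P.subtype).quotKerEquivRange.trans (LinearEquiv.ofEq _ _ hrange))).length_eq]

theorem mLen_quotient_mul_pow_eq_fibLen_add {R : Type*} [CommRing R] (Q K : Ideal R) (n : ℕ) :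
    mLen R (R ⧸ (K * Q ^ n)) = fibLen R Q K n + mLen R (R ⧸ (Q ^ n)) := by
  rw [fibLen, mLen_eq_length, mLen_eq_length, mLen_eq_length,
    Module.length_quotient_eq_add_of_le (Ideal.mul_le_right : K * Q ^ n ≤ Q ^ n)]
  rfl

-- Degree-`k` expansion in `m = n - 1`; `d` only fixes the offsets, so the forward difference
-- in `m` lowers `k` and keeps `d`.
def altChooseSum (d k : ℕ) (a : ℕ → ℤ) (m : ℕ) : ℤ :=
  ∑ j ∈ Finset.range (k + 1), (-1) ^ j * a j * ((m + (d - j)).choose (k - j) : ℤ)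

theorem hilbSum_succ (d : ℕ) (a : ℕ → ℤ) (m : ℕ) :
    hilbSum d a (m + 1) = altChooseSum d d a m := by
  refine Finset.sum_congr rfl fun j hj => ?_
  rw [show m + 1 + d - j - 1 = m + (d - j) by grind]

theorem fiberSum_succ {d : ℕ} (hd : 0 < d) (a : ℕ → ℤ) (m : ℕ) :
    fiberSum d a (m + 1) = altChooseSum d (d - 1) a m := by
  rw [fiberSum, altChooseSum, Nat.sub_add_cancel hd]
  refine Finset.sum_congr rfl fun j hj => ?_
  rw [show m + 1 + d - j - 1 = m + (d - j) by grind, Nat.sub_right_comm]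

@[simp]
theorem altChooseSum_zero (d : ℕ) (a : ℕ → ℤ) (m : ℕ) : altChooseSum d 0 a m = a 0 := by
  simp [altChooseSum]

theorem altChooseSum_succ_sub (d k : ℕ) (a : ℕ → ℤ) (m : ℕ) :
    altChooseSum d (k + 1) a (m + 1) - altChooseSum d (k + 1) a m = altChooseSum d k a m := by
  simp only [altChooseSum, Finset.sum_range_succ _ (k + 1), Nat.sub_self, Nat.choose_zero_right,
    add_sub_add_right_eq_sub, ← Finset.sum_sub_distrib]
  refine Finset.sum_congr rfl fun j hj => ?_
  have hj : j ≤ k := Finset.mem_range_succ_iff.1 hj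
  rw [show m + 1 + (d - j) = m + (d - j) + 1 by omega, show k + 1 - j = k - j + 1 by omega,
    Nat.choose_succ_succ]
  push_cast
  ring

section altChooseSum

variable {d k : ℕ} {a b : ℕ → ℤ}

theorem altChooseSum_add (m : ℕ) :
    altChooseSum d k (a + b) m = altChooseSum d k a m + altChooseSum d k b m := by
  simp only [altChooseSum, ← Finset.sum_add_distrib, Pi.add_apply]
  exact Finset.sum_congr rfl fun _ _ => by ring

theorem altChooseSum_sub (m : ℕ) :
    altChooseSum d k (a - b) m = altChooseSum d k a m - altChooseSum d k b m := by
  simp only [altChooseSum, ← Finset.sum_sub_distrib, Pi.sub_apply]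
  exact Finset.sum_congr rfl fun _ _ => by ring

theorem altChooseSum_succ_eq_neg (ha : a 0 = 0) {i : ℕ} (hi : i ≤ d) (m : ℕ) :
    altChooseSum d (i + 1) a m = -altChooseSum d i (fun j => a j + a (j + 1)) m := by
  have hlow : altChooseSum d i a m = ∑ j ∈ Finset.range i,
      (-1) ^ (j + 1) * a (j + 1) * ((m + (d - (j + 1))).choose (i - (j + 1)) : ℤ) := by
    cases i with
    | zero => simp [altChooseSum, ha]
    | succ i => simp [altChooseSum, Finset.sum_range_succ' _ (i + 1), ha]
  rw [show (fun j => a j + a (j + 1)) = a + fun j => a (j + 1) from rfl, altChooseSum_add, hlow,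
    altChooseSum, altChooseSum, Finset.sum_range_succ' _ (i + 1), Finset.sum_range_succ _ i,
    Finset.sum_range_succ _ i]
  simp only [ha, Nat.add_sub_add_right, Nat.sub_self, Nat.choose_zero_right, mul_zero, zero_mul,
    add_zero]
  have hpascal : ∀ j ∈ Finset.range i, ((m + (d - (j + 1))).choose (i - j) : ℤ) =
      (m + (d - j)).choose (i - j) - (m + (d - (j + 1))).choose (i - (j + 1)) := by
    intro j hj
    have hj := Finset.mem_range.1 hj
    rw [show m + (d - j) = m + (d - (j + 1)) + 1 by omega, show i - j = i - (j + 1) + 1 by omega,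
      Nat.choose_succ_succ]
    push_cast
    ring
  rw [Finset.sum_congr rfl fun j hj => by rw [hpascal j hj]]
  simp only [mul_sub, Finset.sum_sub_distrib, pow_succ, mul_neg_one, neg_mul,
    Finset.sum_neg_distrib]
  ring

theorem eq_zero_of_eventually_altChooseSum_eq_zero
    (h : ∀ᶠ m in atTop, altChooseSum d k a m = 0) : ∀ j ≤ k, a j = 0 := by
  induction k with
  | zero =>
    obtain ⟨m, hm⟩ := h.exists
    simpa using hm
  | succ k ih =>
    have hlow : ∀ j ≤ k, a j = 0 := ih <| by
      filter_upwards [h, (tendsto_add_atTop_nat 1).eventually h] with m hm hm1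
      rw [← altChooseSum_succ_sub, hm, hm1, sub_zero]
    intro j hj
    rcases Nat.lt_or_eq_of_le hj with hj | rfl
    · exact hlow j (by omega)
    obtain ⟨m, hm⟩ := h.exists
    rw [altChooseSum, Finset.sum_range_succ, Finset.sum_eq_zero fun i hi => by
      simp [hlow i (Finset.mem_range_succ_iff.1 hi)]] at hm
    simpa using hm

theorem apply_zero_eq_zero_of_eventually_altChooseSum_succ_eq
    (h : ∀ᶠ m in atTop, altChooseSum d (k + 1) a m = altChooseSum d k b m) : a 0 = 0 := by
  induction k generalizing b with
  | zero =>
    obtain ⟨m, hm, hm1⟩ := (h.and ((tendsto_add_atTop_nat 1).eventually h)).exists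
    rw [← altChooseSum_zero d a m, ← altChooseSum_succ_sub, hm, hm1, altChooseSum_zero,
      altChooseSum_zero, sub_self]
  | succ k ih =>
    refine ih (b := b) ?_
    filter_upwards [h, (tendsto_add_atTop_nat 1).eventually h] with m hm hm1
    rw [← altChooseSum_succ_sub d (k + 1) a m, ← altChooseSum_succ_sub d k b m, hm, hm1]

end altChooseSum

theorem stmt_1_general (R : Type) [CommRing R]
    (d : ℕ) (hd : 0 < d)
    (Q K : Ideal R)
    (lenK lenQ lenF : ℕ → ℕ)
    (hlenK : ∀ n, (lenK n : WithBot ℕ∞) = mLen R (R ⧸ (K * Q ^ n)))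
    (hlenQ : ∀ n, (lenQ n : WithBot ℕ∞) = mLen R (R ⧸ (Q ^ n)))
    (hlenF : ∀ n, (lenF n : WithBot ℕ∞) = fibLen R Q K n)
    (g e f : ℕ → ℤ)
    (hg : ∃ N, ∀ n ≥ N, (lenK n : ℤ) = hilbSum d g n)
    (he : ∃ N, ∀ n ≥ N, (lenQ n : ℤ) = hilbSum d e n)
    (hf : ∃ N, ∀ n ≥ N, (lenF n : ℤ) = fiberSum d f n) :
    g 0 = e 0 ∧ ∀ i, i ≤ d - 1 → f i = e (i + 1) - g (i + 1) + e i - g i := by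
  have hlen (n : ℕ) : lenK n = lenF n + lenQ n := by
    have h := mLen_quotient_mul_pow_eq_fibLen_add Q K n
    rw [← hlenK, ← hlenF, ← hlenQ] at h
    exact_mod_cast h
  have key : ∀ᶠ m in atTop,
      altChooseSum d (d - 1 + 1) (g - e) m = altChooseSum d (d - 1) f m := by
    filter_upwards [(tendsto_add_atTop_nat 1).eventually (eventually_atTop.2 hg),
      (tendsto_add_atTop_nat 1).eventually (eventually_atTop.2 he),
      (tendsto_add_atTop_nat 1).eventually (eventually_atTop.2 hf)] with m hgm hem hfm
    rw [Nat.sub_add_cancel hd, altChooseSum_sub, ← hilbSum_succ, ← hilbSum_succ,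
      ← fiberSum_succ hd, ← hgm, ← hem, ← hfm, hlen]
    push_cast
    ring
  have h0 : (g - e) 0 = 0 := apply_zero_eq_zero_of_eventually_altChooseSum_succ_eq key
  refine ⟨sub_eq_zero.1 h0, fun i hi => ?_⟩
  have hvanish : ∀ᶠ m in atTop,
      altChooseSum d (d - 1) (f + fun j => (g - e) j + (g - e) (j + 1)) m = 0 :=
    key.mono fun m hm => by
      rw [altChooseSum_add, ← hm, altChooseSum_succ_eq_neg h0 (Nat.sub_le d 1), neg_add_cancel]
  have hi := eq_zero_of_eventually_altChooseSum_eq_zero hvanish i hi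
  simp only [Pi.add_apply, Pi.sub_apply] at hi
  linarith

/-- `g_0(Q) = e_0(Q)` and
`f_i(Q) = e_{i+1}(Q) - g_{i+1}(Q) + e_i(Q) - g_i(Q)` for `0 ≤ i ≤ d-1`. -/
theorem stmt_1 (R : Type) [CommRing R] [IsLocalRing R] [IsNoetherianRing R]
    (d : ℕ) (hd : 0 < d) (hdim : ringKrullDim R = d)
    (Q K : Ideal R) (hQprim : Q.radical = maximalIdeal R) (hQK : Q ≤ K)
    (lenK lenQ lenF : ℕ → ℕ)
    (hlenK : ∀ n, (lenK n : WithBot ℕ∞) = mLen R (R ⧸ (K * Q ^ n)))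
    (hlenQ : ∀ n, (lenQ n : WithBot ℕ∞) = mLen R (R ⧸ (Q ^ n)))
    (hlenF : ∀ n, (lenF n : WithBot ℕ∞) = fibLen R Q K n)
    (g e f : ℕ → ℤ)
    (hg : ∃ N, ∀ n ≥ N, (lenK n : ℤ) = hilbSum d g n)
    (he : ∃ N, ∀ n ≥ N, (lenQ n : ℤ) = hilbSum d e n)
    (hf : ∃ N, ∀ n ≥ N, (lenF n : ℤ) = fiberSum d f n) :
    g 0 = e 0 ∧ ∀ i, i ≤ d - 1 → f i = e (i + 1) - g (i + 1) + e i - g i :=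
  stmt_1_general R d hd Q K lenK lenQ lenF hlenK hlenQ hlenF g e f hg he hf
end

section
/- Let (R,m) be a Noetherian local ring, Q an ideal, K an m-primary ideal with Q ⊆ K, and x ∈ Q such that x° is F_K(Q)-superficial and x* is G(Q)-superficial. Then there exists c > 0 such that (KQ^n : x) ∩ Q^c = KQ^{n-1} for all n > c. Moreover if x is a regular element of R, then (KQ^n : x) = KQ^{n-1} for all n ≫ 0. -/
open IsLocalRing

/-! The conductor `(KQⁿ : x)` is squeezed between the two superficiality conditions: if
`xy ∈ KQⁿ` and `y ∈ Q^c`, then `G(Q)`-superficiality puts `y` in `Q^{n-1}`, after which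
`F_K(Q)`-superficiality puts it in `KQ^{n-1}`. When `x` is regular, Artin–Rees applied to
`(x)` shows that `(Qⁿ : x) ⊆ Q^{n-k}` for a fixed `k`, so for large `n` the intersection
with `Q^c` is automatic. -/

namespace Ideal

variable {R : Type*} [CommRing R]

theorem mul_pow_pred_le_colon {Q K : Ideal R} {x : R} (hxQ : x ∈ Q) {n : ℕ} (hn : 0 < n) :
    K * Q ^ (n - 1) ≤ (K * Q ^ n).colon (span {x}) := fun y hy => by
  rw [mem_colon_span_singleton, ← Nat.sub_add_cancel hn, pow_succ, ← mul_assoc]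
  exact mul_mem_mul hy hxQ

theorem colon_inf_pow_eq_mul_pow_pred {Q K : Ideal R} {x : R} (hxQ : x ∈ Q) {cF cG c n : ℕ}
    (hF : ∀ n > cF, (K * Q ^ (n + 1)).colon (span {x}) ⊓ Q ^ n ≤ K * Q ^ n)
    (hG : ∀ n > cG, (Q ^ n).colon (span {x}) ⊓ Q ^ cG = Q ^ (n - 1))
    (hcF : cF < c) (hcG : cG ≤ c) (hn : c < n) :
    (K * Q ^ n).colon (span {x}) ⊓ Q ^ c = K * Q ^ (n - 1) := by
  refine le_antisymm (fun y hy => ?_) (le_inf (mul_pow_pred_le_colon hxQ (by omega))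
    (mul_le_right.trans (pow_le_pow_right (by omega))))
  obtain ⟨hyK, hyc⟩ := Submodule.mem_inf.mp hy
  have hyQ : y ∈ Q ^ (n - 1) := by
    rw [← hG n (by omega)]
    exact ⟨Submodule.colon_mono mul_le_right le_rfl hyK, pow_le_pow_right hcG hyc⟩
  refine hF (n - 1) (by omega) ⟨?_, hyQ⟩
  rwa [Nat.sub_add_cancel (by omega : 1 ≤ n)]

theorem exists_colon_pow_le_pow_sub [IsNoetherianRing R] (Q : Ideal R) {x : R}
    (hx : x ∈ nonZeroDivisors R) : ∃ k, ∀ n ≥ k, (Q ^ n).colon (span {x}) ≤ Q ^ (n - k) := by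
  obtain ⟨k, hk⟩ := Q.exists_pow_inf_eq_pow_smul (span {x} : Submodule R R)
  refine ⟨k, fun n hn y hy => ?_⟩
  rw [mem_colon_span_singleton] at hy
  have hyx : y * x ∈ Q ^ n • (⊤ : Submodule R R) ⊓ span {x} :=
    ⟨by simpa using hy, mul_mem_left _ _ (mem_span_singleton_self x)⟩
  rw [hk n hn] at hyx
  have hyx' : x * y ∈ span {x} * Q ^ (n - k) := by
    rw [mul_comm x, mul_comm (span {x})]
    exact Submodule.smul_mono le_rfl inf_le_right hyx
  obtain ⟨z, hz, hzy⟩ := mem_span_singleton_mul.mp hyx'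
  rwa [← (mul_cancel_left_mem_nonZeroDivisors hx).mp hzy]

end Ideal

theorem stmt_4_general (R : Type) [CommRing R] [IsNoetherianRing R]
    (Q K : Ideal R)
    (x : R) (hF : IsFSuperficial Q K x) (hG : IsGSuperficial Q x) :
    (∃ c > 0, ∀ n > c,
      Submodule.colon (K * Q ^ n) (Ideal.span {x}) ⊓ Q ^ c = K * Q ^ (n - 1)) ∧
    (x ∈ nonZeroDivisors R →
      ∃ N, ∀ n ≥ N,
        Submodule.colon (K * Q ^ n) (Ideal.span {x}) = K * Q ^ (n - 1)) := by
  obtain ⟨hxQ, -, cF, -, hF⟩ := hF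
  obtain ⟨-, -, cG, hcG, hG⟩ := hG
  have key : ∀ n > cF + cG, (K * Q ^ n).colon (Ideal.span {x}) ⊓ Q ^ (cF + cG) = K * Q ^ (n - 1) :=
    fun n hn => Ideal.colon_inf_pow_eq_mul_pow_pred hxQ hF hG (by omega) le_add_self hn
  refine ⟨⟨cF + cG, by omega, key⟩, fun hx => ?_⟩
  obtain ⟨k, hk⟩ := Q.exists_colon_pow_le_pow_sub hx
  refine ⟨k + cF + cG + 1, fun n hn => ?_⟩
  have hcolon : (K * Q ^ n).colon (Ideal.span {x}) ≤ Q ^ (cF + cG) :=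
    (Submodule.colon_mono Ideal.mul_le_right le_rfl).trans
      ((hk n (by omega)).trans (Ideal.pow_le_pow_right (by omega : cF + cG ≤ n - k)))
  rw [← key n (by omega), inf_eq_left.mpr hcolon]

/-- if `x°` is `F_K(Q)`-superficial and `x*` is `G(Q)`-superficial, then
there is `c > 0` with `(KQⁿ : x) ∩ Q^c = KQ^{n-1}` for all `n > c`; moreover if `x` is a
regular element then `(KQⁿ : x) = KQ^{n-1}` for all `n ≫ 0`. -/
theorem stmt_4 (R : Type) [CommRing R] [IsLocalRing R] [IsNoetherianRing R]
    (Q K : Ideal R) (hKprim : K.radical = maximalIdeal R) (hQK : Q ≤ K)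
    (x : R) (hF : IsFSuperficial Q K x) (hG : IsGSuperficial Q x) :
    (∃ c > 0, ∀ n > c,
      Submodule.colon (K * Q ^ n) (Ideal.span {x}) ⊓ Q ^ c = K * Q ^ (n - 1)) ∧
    (x ∈ nonZeroDivisors R →
      ∃ N, ∀ n ≥ N,
        Submodule.colon (K * Q ^ n) (Ideal.span {x}) = K * Q ^ (n - 1)) :=
  stmt_4_general R Q K x hF hG
end

section
/- Let (R,m) be a Noetherian local ring of dimension d > 0, Q an m-primary ideal, K ⊇ Q an ideal, and x ∈ Q such that x* is G(Q)-superficial and x° is F_K(Q)-superficial. Then KQ^n ∩ (0 : x) = 0 and (KQ^n : x) = KQ^{n-1} + (0 : x) for all n ≫ 0. -/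
open IsLocalRing

/-! By Artin–Rees, an element of `KQⁿ ∩ (x)` is `bx` with `b ∈ Q^{n-k}`; superficiality of `x*`
pushes `b` into `Q^{n-1}`, and then superficiality of `x°` pushes it into `KQ^{n-1}`. The same
superficiality of `x*` shows that `(0 : x) ∩ Q^c` lies in every power of `Q`, hence vanishes by
Krull's intersection theorem. -/

namespace Ideal

variable {R : Type*} [CommRing R] {Q K : Ideal R} {x : R}

theorem mem_colon_bot_span_singleton {a : R} :
    a ∈ (⊥ : Ideal R).colon (span {x}) ↔ a * x = 0 := by
  rw [mem_colon_span_singleton, Submodule.mem_bot]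

theorem exists_pow_inf_span_singleton_le [IsNoetherianRing R] (Q : Ideal R) (x : R) :
    ∃ k, ∀ n ≥ k, Q ^ n ⊓ span {x} ≤ Q ^ (n - k) * span {x} := by
  obtain ⟨k, hk⟩ := exists_pow_inf_eq_pow_smul Q (M := R) (span {x})
  refine ⟨k, fun n hn => ?_⟩
  have := hk n hn
  simp only [smul_eq_mul, mul_top] at this
  rw [this]
  exact mul_mono_right inf_le_right

theorem sup_colon_bot_le_colon_mul_pow_succ (hx : x ∈ Q) (m : ℕ) :
    K * Q ^ m ⊔ (⊥ : Ideal R).colon (span {x}) ≤ (K * Q ^ (m + 1)).colon (span {x}) := by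
  refine sup_le (fun a ha => mem_colon_span_singleton.2 ?_) (fun a ha => ?_)
  · rw [pow_succ, ← mul_assoc]
    exact mul_mem_mul ha hx
  · rw [mem_colon_span_singleton, mem_colon_bot_span_singleton.1 ha]
    exact zero_mem _

section Superficial

variable {c : ℕ} (hG : ∀ n > c, (Q ^ n).colon (span {x}) ⊓ Q ^ c = Q ^ (n - 1))
include hG

theorem mem_pow_pred_of_mul_mem_pow {n : ℕ} (hn : c < n) {b : R} (hb : b ∈ Q ^ c)
    (hbx : b * x ∈ Q ^ n) : b ∈ Q ^ (n - 1) :=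
  hG n hn ▸ Submodule.mem_inf.2 ⟨mem_colon_span_singleton.2 hbx, hb⟩

theorem eq_zero_of_mul_eq_zero_of_mem_pow [IsNoetherianRing R] [IsLocalRing R] (hQ : Q ≠ ⊤)
    {a : R} (hax : a * x = 0) (ha : a ∈ Q ^ c) : a = 0 := by
  have hmem : a ∈ ⨅ i : ℕ, Q ^ i := by
    refine Submodule.mem_iInf _ |>.2 fun i => ?_
    have hQ0 : a * x ∈ Q ^ (max i c + 1) := by
      rw [hax]
      exact zero_mem _
    exact Ideal.pow_le_pow_right (by omega) (mem_pow_pred_of_mul_mem_pow hG (by omega) ha hQ0)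
  rwa [iInf_pow_eq_bot_of_isLocalRing Q hQ, Submodule.mem_bot] at hmem

theorem mul_pow_inf_colon_bot_eq_bot [IsNoetherianRing R] [IsLocalRing R] (hQ : Q ≠ ⊤)
    {n : ℕ} (hn : c ≤ n) : K * Q ^ n ⊓ (⊥ : Ideal R).colon (span {x}) = ⊥ := by
  refine (Submodule.eq_bot_iff _).2 fun a ha => ?_
  obtain ⟨haK, hax⟩ := Submodule.mem_inf.1 ha
  exact eq_zero_of_mul_eq_zero_of_mem_pow hG hQ (mem_colon_bot_span_singleton.1 hax)
    (Ideal.pow_le_pow_right hn (mul_le_right haK))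

theorem exists_colon_mul_pow_succ_le [IsNoetherianRing R] {c' : ℕ}
    (hF : ∀ n > c', (K * Q ^ (n + 1)).colon (span {x}) ⊓ Q ^ n ≤ K * Q ^ n) :
    ∃ N, ∀ m ≥ N,
      (K * Q ^ (m + 1)).colon (span {x}) ≤ K * Q ^ m ⊔ (⊥ : Ideal R).colon (span {x}) := by
  obtain ⟨k, hk⟩ := exists_pow_inf_span_singleton_le Q x
  refine ⟨k + c + c' + 1, fun m hm a ha => ?_⟩
  have hax : a * x ∈ K * Q ^ (m + 1) := mem_colon_span_singleton.1 ha
  obtain ⟨b, hb, hbx⟩ := mem_mul_span_singleton.1 <|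
    hk (m + 1) (by omega) ⟨mul_le_right hax, mem_span_singleton.2 ⟨a, mul_comm a x⟩⟩
  have hbQ : b ∈ Q ^ m :=
    mem_pow_pred_of_mul_mem_pow hG (by omega) (Ideal.pow_le_pow_right (by omega) hb)
      (hbx ▸ mul_le_right hax)
  have hbKQ : b ∈ K * Q ^ m :=
    hF m (by omega) (Submodule.mem_inf.2 ⟨mem_colon_span_singleton.2 (hbx ▸ hax), hbQ⟩)
  have hab : a - b ∈ (⊥ : Ideal R).colon (span {x}) := by
    rw [mem_colon_bot_span_singleton, sub_mul, hbx, sub_self]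
  simpa using Submodule.add_mem_sup hbKQ hab

end Superficial

end Ideal

open Ideal in
theorem stmt_5_general (R : Type) [CommRing R] [IsLocalRing R] [IsNoetherianRing R]
    (Q K : Ideal R)
    (x : R) (hG : IsGSuperficial Q x) (hF : IsFSuperficial Q K x) :
    ∃ N ≥ 1, ∀ n ≥ N,
      (K * Q ^ n) ⊓ Submodule.colon (⊥ : Ideal R) (Ideal.span {x}) = ⊥ ∧
      Submodule.colon (K * Q ^ n) (Ideal.span {x}) =
        K * Q ^ (n - 1) ⊔ Submodule.colon (⊥ : Ideal R) (Ideal.span {x}) := by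
  obtain ⟨hxQ, hxQ2, c, -, hc⟩ := hG
  obtain ⟨-, -, c', -, hc'⟩ := hF
  have hQ : Q ≠ ⊤ := by
    rintro rfl
    exact hxQ2 (by rw [top_pow]; trivial)
  obtain ⟨N, hN⟩ := exists_colon_mul_pow_succ_le hc hc'
  refine ⟨N + c + 1, by omega, fun n hn => ⟨mul_pow_inf_colon_bot_eq_bot hc hQ (by omega), ?_⟩⟩
  obtain ⟨m, rfl⟩ : ∃ m, n = m + 1 := ⟨n - 1, by omega⟩
  exact (hN m (by omega)).antisymm (sup_colon_bot_le_colon_mul_pow_succ hxQ m)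

/-- if `x*` is `G(Q)`-superficial and `x°` is `F_K(Q)`-superficial, then
`KQⁿ ∩ (0 : x) = 0` and `(KQⁿ : x) = KQ^{n-1} + (0 : x)` for all `n ≫ 0`. -/
theorem stmt_5 (R : Type) [CommRing R] [IsLocalRing R] [IsNoetherianRing R]
    (d : ℕ) (hd : 0 < d) (hdim : ringKrullDim R = d)
    (Q K : Ideal R) (hQprim : Q.radical = maximalIdeal R) (hQK : Q ≤ K)
    (x : R) (hG : IsGSuperficial Q x) (hF : IsFSuperficial Q K x) :
    ∃ N ≥ 1, ∀ n ≥ N,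
      (K * Q ^ n) ⊓ Submodule.colon (⊥ : Ideal R) (Ideal.span {x}) = ⊥ ∧
      Submodule.colon (K * Q ^ n) (Ideal.span {x}) =
        K * Q ^ (n - 1) ⊔ Submodule.colon (⊥ : Ideal R) (Ideal.span {x}) :=
  stmt_5_general R Q K x hG hF
end

section
/- Let (R,m) be a one-dimensional Noetherian local ring, Q a parameter ideal, and K an m-primary ideal. Then g_1(Q) = -ℓ(R/K) - ℓ(H_m^0(K)), where H_m^0(K) is the zeroth local cohomology of K with support in m. -/
open IsLocalRing

/-! Write `Q = (x)` and `W = H⁰_m(R)`. As `mᵏ ⊆ (x)`, multiplication by `x` is injective on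
`R/W`, so `ℓ(R/(W + xⁿK)) = ℓ(R/(W + K)) + n ℓ(R/(W + Q))`; since moreover `W` is killed by a
power of `m`, `Qⁿ ∩ W = 0` for `n ≫ 0`. The modular identity
`ℓ(M/N) + ℓ(N ∩ P) = ℓ(P) + ℓ(M/(N + P))`, applied to `N = KQⁿ` and to `N = K` with `P = W`,
then gives `ℓ(R/KQⁿ) = ℓ(R/K) + ℓ(K ∩ W) + n ℓ(R/(W + Q))` for `n ≫ 0`, and comparing this with
`g₀ n - g₁` yields the claim. -/

namespace Module

variable {R L M : Type*} [CommRing R] [AddCommGroup L] [Module R L] [AddCommGroup M] [Module R M]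

theorem length_eq_length_add_length_quotient (N : Submodule R M) :
    length R M = length R N + length R (M ⧸ N) :=
  length_eq_add_of_exact N.subtype N.mkQ N.injective_subtype N.mkQ_surjective
    (LinearMap.exact_subtype_mkQ N)

theorem length_quotient_eq_length_quotient_ker_add (f : L →ₗ[R] M) (N : Submodule R M) :
    length R (M ⧸ N) =
      length R (L ⧸ LinearMap.ker (N.mkQ ∘ₗ f)) + length R (M ⧸ (N ⊔ LinearMap.range f)) := by
  have hrange : LinearMap.range (N.mkQ ∘ₗ f) = (LinearMap.range f).map N.mkQ :=
    LinearMap.range_comp f N.mkQ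
  rw [length_eq_length_add_length_quotient (LinearMap.range (N.mkQ ∘ₗ f)),
    (LinearMap.quotKerEquivRange (N.mkQ ∘ₗ f)).length_eq, hrange,
    (Submodule.quotientQuotientEquivQuotientSup N (LinearMap.range f)).length_eq]

theorem length_quotient_add_length_inf (N P : Submodule R M) :
    length R (M ⧸ N) + length R ↥(N ⊓ P) = length R P + length R (M ⧸ (N ⊔ P)) := by
  have hker : LinearMap.ker (N.mkQ ∘ₗ P.subtype) = N.comap P.subtype := by
    rw [LinearMap.ker_comp, Submodule.ker_mkQ]
  have hinf : length R ↥(N.comap P.subtype) = length R ↥(N ⊓ P) := by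
    rw [(Submodule.equivMapOfInjective _ P.injective_subtype _).length_eq,
      Submodule.map_comap_subtype, inf_comm]
  rw [length_quotient_eq_length_quotient_ker_add P.subtype N, Submodule.range_subtype, hker,
    length_eq_length_add_length_quotient (N.comap P.subtype : Submodule R P), hinf]
  ring

theorem length_quotient_eq_length_quotient_colon_add (N : Submodule R M) (x : M) :
    length R (M ⧸ N) = length R (R ⧸ N.colon {x}) + length R (M ⧸ (N ⊔ R ∙ x)) := by
  have hker : LinearMap.ker (N.mkQ ∘ₗ LinearMap.toSpanSingleton R M x) = N.colon {x} := by
    ext r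
    simp [Submodule.mem_colon_singleton, ← Submodule.Quotient.mk_smul]
  rw [length_quotient_eq_length_quotient_ker_add (LinearMap.toSpanSingleton R M x) N, hker,
    LinearMap.range_toSpanSingleton]

end Module

namespace Ideal

section Colon

variable {R : Type*} [CommRing R] {W : Ideal R} {x : R}

theorem sup_span_singleton_mul_colon (hx : ∀ z, x * z ∈ W → z ∈ W) (C : Ideal R) :
    (W ⊔ Ideal.span {x} * C).colon {x} = W ⊔ C := by
  ext z
  rw [Submodule.mem_colon_singleton, smul_eq_mul]
  constructor
  · intro hz
    obtain ⟨w, hw, u, hu, hwu⟩ := Submodule.mem_sup.mp hz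
    obtain ⟨c, hc, rfl⟩ := Ideal.mem_span_singleton_mul.mp hu
    have hzc : x * (z - c) ∈ W := by
      rw [mul_sub, mul_comm x z, ← hwu]
      simpa using hw
    simpa using Submodule.add_mem_sup (hx _ hzc) hc
  · intro hz
    obtain ⟨w, hw, c, hc, rfl⟩ := Submodule.mem_sup.mp hz
    rw [add_mul, mul_comm c x]
    exact Submodule.add_mem_sup (W.mul_mem_right x hw)
      (Ideal.mul_mem_mul (Ideal.mem_span_singleton_self x) hc)

theorem length_quotient_sup_span_singleton_pow_mul (hx : ∀ z, x * z ∈ W → z ∈ W)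
    (C : Ideal R) (n : ℕ) :
    Module.length R (R ⧸ (W ⊔ Ideal.span {x} ^ n * C)) =
      Module.length R (R ⧸ (W ⊔ C)) + n • Module.length R (R ⧸ (W ⊔ Ideal.span {x})) := by
  induction n with
  | zero => rw [pow_zero, one_mul, zero_nsmul, add_zero]
  | succ n ih =>
    have hsup : W ⊔ Ideal.span {x} * (Ideal.span {x} ^ n * C) ⊔ Ideal.span {x} =
        W ⊔ Ideal.span {x} := by
      rw [sup_assoc, sup_eq_right.mpr (Ideal.mul_le_left (J := Ideal.span {x} ^ n * C))]
    rw [pow_succ', mul_assoc, Module.length_quotient_eq_length_quotient_colon_add _ x,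
      sup_span_singleton_mul_colon hx, ih, Ideal.submodule_span_eq, hsup, succ_nsmul, add_assoc]

theorem length_quotient_mul_span_singleton_pow (hx : ∀ z, x * z ∈ W → z ∈ W) {n : ℕ}
    (hdisj : Ideal.span {x} ^ n ⊓ W = ⊥) (K : Ideal R) :
    Module.length R (R ⧸ (K * Ideal.span {x} ^ n)) =
      Module.length R (R ⧸ K) + Module.length R ↥(K ⊓ W) +
        n • Module.length R (R ⧸ (W ⊔ Ideal.span {x})) := by
  have hdisjK : K * Ideal.span {x} ^ n ⊓ W = ⊥ :=
    eq_bot_iff.mpr (hdisj ▸ inf_le_inf_right W Ideal.mul_le_right)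
  have hK := Module.length_quotient_add_length_inf K W
  have hKx := Module.length_quotient_add_length_inf (K * Ideal.span {x} ^ n) W
  rw [hdisjK, Module.length_bot, add_zero, sup_comm, mul_comm,
    length_quotient_sup_span_singleton_pow_mul hx] at hKx
  rw [mul_comm K, hKx, hK, sup_comm, add_assoc]

end Colon

section PowTorsion

variable {R : Type*} [CommRing R] (I : Ideal R)

/-- The `I`-power torsion `H⁰_I(R)`. -/
def powTorsion : Ideal R :=
  ⨆ t : ℕ, Submodule.colon (⊥ : Submodule R R) ((I ^ t : Ideal R) : Set R)

variable {I}

theorem monotone_colon_bot_pow :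
    Monotone fun t : ℕ => Submodule.colon (⊥ : Submodule R R) ((I ^ t : Ideal R) : Set R) :=
  fun _ _ hst => Submodule.colon_mono le_rfl (Ideal.pow_le_pow_right hst)

theorem mem_powTorsion {a : R} : a ∈ I.powTorsion ↔ ∃ t, ∀ p ∈ I ^ t, a * p = 0 := by
  simp only [powTorsion, Submodule.mem_iSup_of_directed _ monotone_colon_bot_pow.directed_le,
    Submodule.mem_colon, SetLike.mem_coe, smul_eq_mul, Submodule.mem_bot]

theorem exists_pow_mul_eq_zero_of_mem_powTorsion [IsNoetherianRing R] :
    ∃ t, ∀ a ∈ I.powTorsion, ∀ p ∈ I ^ t, a * p = 0 := by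
  obtain ⟨n, hn⟩ := monotone_stabilizes_iff_noetherian.mpr inferInstance
    ⟨_, monotone_colon_bot_pow (I := I)⟩
  have hle : I.powTorsion ≤ Submodule.colon ⊥ ((I ^ n : Ideal R) : Set R) :=
    iSup_le fun i => (le_total i n).elim (monotone_colon_bot_pow ·) fun h => (hn i h).ge
  refine ⟨n, fun a ha p hp => ?_⟩
  simpa using Submodule.mem_colon.mp (hle ha) p hp

theorem mem_powTorsion_of_mul_mem {x : R} {k : ℕ} (hk : I ^ k ≤ Ideal.span {x}) {z : R}
    (hxz : x * z ∈ I.powTorsion) : z ∈ I.powTorsion := by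
  obtain ⟨s, hs⟩ := mem_powTorsion.mp hxz
  refine mem_powTorsion.mpr ⟨s + k, fun p hp => ?_⟩
  have hann : I ^ s * I ^ k ≤ Submodule.colon (⊥ : Ideal R) {z} := by
    refine Ideal.mul_le.mpr fun a ha b hb => ?_
    obtain ⟨c, rfl⟩ := Ideal.mem_span_singleton'.mp (hk hb)
    rw [Submodule.mem_colon_singleton, smul_eq_mul, Submodule.mem_bot,
      show a * (c * x) * z = c * (x * z * a) by ring, hs a ha, mul_zero]
  rw [pow_add] at hp
  rw [mul_comm]
  simpa using Submodule.mem_colon_singleton.mp (hann hp)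

theorem span_singleton_pow_inf_powTorsion_eq_bot [IsNoetherianRing R] {x : R} (hxI : x ∈ I)
    {k : ℕ} (hk : I ^ k ≤ Ideal.span {x}) :
    ∃ t, ∀ n ≥ t, Ideal.span {x} ^ n ⊓ I.powTorsion = ⊥ := by
  obtain ⟨t, ht⟩ := exists_pow_mul_eq_zero_of_mem_powTorsion (I := I)
  refine ⟨t, fun n hn => eq_bot_iff.mpr fun a ⟨hax, haT⟩ => ?_⟩
  rw [Ideal.span_singleton_pow] at hax
  obtain ⟨c, rfl⟩ := Ideal.mem_span_singleton'.mp hax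
  have hkn : I ^ (k * n) ≤ Ideal.span {x ^ n} := by
    rw [pow_mul, ← Ideal.span_singleton_pow]
    exact Ideal.pow_right_mono hk n
  rw [mul_comm] at haT
  have hc := mem_powTorsion_of_mul_mem hkn haT
  rw [Submodule.mem_bot]
  exact ht c hc _ (Ideal.pow_le_pow_right hn (Ideal.pow_mem_pow hxI n))

end PowTorsion

end Ideal

theorem natCast_eq_mLen_iff {R M : Type*} [CommRing R] [AddCommGroup M] [Module R M]
    {n : ℕ} :
    (n : WithBot ℕ∞) = mLen R M ↔ (n : ℕ∞) = Module.length R M := by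
  rw [mLen, ← Module.coe_length]
  norm_cast

theorem hilbSum_one (g : ℕ → ℤ) (n : ℕ) : hilbSum 1 g n = g 0 * n - g 1 := by
  simp [hilbSum, Finset.sum_range_succ, sub_eq_add_neg]

theorem eq_neg_sub_of_eventually_eq_add_nsmul {f : ℕ → ℕ} {a b : ℕ} {e : ℕ∞} {g₀ g₁ : ℤ}
    (hf : ∃ N, ∀ n ≥ N, (f n : ℕ∞) = a + b + n • e)
    (hg : ∃ N, ∀ n ≥ N, (f n : ℤ) = g₀ * n - g₁) :
    g₁ = -a - b := by
  obtain ⟨N₁, hf⟩ := hf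
  obtain ⟨N₂, hg⟩ := hg
  set n := N₁ + N₂ + 1
  have he : e ≠ ⊤ := by
    rintro rfl
    simpa [nsmul_eq_mul, ENat.mul_top (show (n : ℕ∞) ≠ 0 by norm_cast)] using hf n (by omega)
  lift e to ℕ using he
  have hfℤ : ∀ m ≥ N₁, (f m : ℤ) = a + b + m * e := fun m hm => by
    have := hf m hm
    rw [nsmul_eq_mul] at this
    exact_mod_cast this
  have h₀ := hfℤ n (by omega)
  have h₁ := hfℤ (n + 1) (by omega)
  have h₂ := hg n (by omega)
  have h₃ := hg (n + 1) (by omega)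
  push_cast at h₁ h₃
  have hg₀ : g₀ = e := by linarith
  subst hg₀
  linarith

theorem stmt_8_general (R : Type) [CommRing R] [IsLocalRing R] [IsNoetherianRing R]
    (Q : Ideal R) (hQ : IsParameterIdeal R 1 Q)
    (K : Ideal R)
    (lenK : ℕ → ℕ)
    (hlenK : ∀ n, (lenK n : WithBot ℕ∞) = mLen R (R ⧸ (K * Q ^ n)))
    (g : ℕ → ℤ)
    (hg : ∃ N, ∀ n ≥ N, (lenK n : ℤ) = hilbSum 1 g n)
    (lK : ℕ) (hlK : (lK : WithBot ℕ∞) = mLen R (R ⧸ K))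
    (lH : ℕ)
    (hlH : (lH : WithBot ℕ∞) =
      mLen R ↥(K ⊓ ⨆ t : ℕ, Submodule.colon (⊥ : Submodule R R) (((maximalIdeal R) ^ t : Ideal R) : Set R))) :
    g 1 = -(lK : ℤ) - (lH : ℤ) := by
  obtain ⟨⟨xs, hQx⟩, hQrad⟩ := hQ
  set x := xs 0
  have hQ : Q = Ideal.span {x} := by rw [hQx, Set.range_unique]; rfl
  have hxm : x ∈ maximalIdeal R :=
    hQrad ▸ Ideal.le_radical (hQ ▸ Ideal.mem_span_singleton_self x)
  obtain ⟨k, hk⟩ : ∃ k, maximalIdeal R ^ k ≤ Ideal.span {x} :=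
    hQ ▸ Ideal.exists_pow_le_of_le_radical_of_fg hQrad.ge (IsNoetherian.noetherian _)
  obtain ⟨t, ht⟩ := Ideal.span_singleton_pow_inf_powTorsion_eq_bot hxm hk
  replace hlH : (lH : ℕ∞) = Module.length R ↥(K ⊓ (maximalIdeal R).powTorsion) :=
    natCast_eq_mLen_iff.mp hlH
  have hlen : ∀ n ≥ t, (lenK n : ℕ∞) =
      lK + lH + n • Module.length R (R ⧸ ((maximalIdeal R).powTorsion ⊔ Ideal.span {x})) :=
    fun n hn => by
      rw [natCast_eq_mLen_iff.mp (hlenK n), hQ, natCast_eq_mLen_iff.mp hlK, hlH,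
        Ideal.length_quotient_mul_span_singleton_pow (fun _ => Ideal.mem_powTorsion_of_mul_mem hk)
          (ht n hn)]
  exact eq_neg_sub_of_eventually_eq_add_nsmul ⟨t, hlen⟩ (by simpa only [hilbSum_one] using hg)

/-- in a one-dimensional Noetherian local ring, for a parameter ideal `Q`
and an `m`-primary ideal `K`, `g_1(Q) = -ℓ(R/K) - ℓ(H⁰_m(K))`. -/
theorem stmt_8 (R : Type) [CommRing R] [IsLocalRing R] [IsNoetherianRing R]
    (hdim : ringKrullDim R = 1)
    (Q : Ideal R) (hQ : IsParameterIdeal R 1 Q)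
    (K : Ideal R) (hKprim : K.radical = maximalIdeal R)
    (lenK : ℕ → ℕ)
    (hlenK : ∀ n, (lenK n : WithBot ℕ∞) = mLen R (R ⧸ (K * Q ^ n)))
    (g : ℕ → ℤ)
    (hg : ∃ N, ∀ n ≥ N, (lenK n : ℤ) = hilbSum 1 g n)
    (lK : ℕ) (hlK : (lK : WithBot ℕ∞) = mLen R (R ⧸ K))
    (lH : ℕ)
    (hlH : (lH : WithBot ℕ∞) =
      mLen R ↥(K ⊓ ⨆ t : ℕ, Submodule.colon (⊥ : Submodule R R) (((maximalIdeal R) ^ t : Ideal R) : Set R))) :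
    g 1 = -(lK : ℤ) - (lH : ℤ) :=
  stmt_8_general R Q hQ K lenK hlenK g hg lK hlK lH hlH
end
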